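/- Let n, r be positive integers, λ > 0, Ω ⊆ {1,…,n}×{1,…,n}, and M ∈ ℝ^{n×n}. Let L_ncvx ∈ ℝ^{n×n} have rank r with compact SVD L_ncvx = UΣVᵀ and tangent space T, and suppose θ := ‖P_Ω(L_ncvx − M)‖_F > 0. Define R ∈ ℝ^{n×n} by θ^{−1}·P_Ω(L_ncvx − M) = −λ·(UVᵀ + R), and assume ‖P_{T⊥}(R)‖ ≤ 1/2. Let L_cvx be any minimizer over L ∈ ℝ^{n×n} of F(L) = ‖P_Ω(L − M)‖_F + λ‖L‖_*, and set Δ = L_cvx − L_ncvx. Then ‖P_{T⊥}(Δ)‖_* ≤ 2·‖P_T(R)‖_F·‖P_T(Δ)‖_F. -/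

import Mathlib

/-!
Write `Δ = L_cvx - L_ncvx` and `Z = P_{T⊥}(Δ)`. At `L_ncvx` the data-fit term
`‖P_Ω(L - M)‖_F` has the subgradient `θ⁻¹ P_Ω(L_ncvx - M) = -λ (U Vᵀ + R)`, and the nuclear norm
has the subgradient `U Vᵀ + W`, where `W` is the polar factor of `Z`: since `Z` is orthogonal to
the column space of `U` and the row space of `Vᵀ`, so is `W`, whence `‖U Vᵀ + W‖ ≤ 1`, while
`⟨W, Z⟩ = ‖Z‖_*`. Feeding both subgradient inequalities into `F(L_cvx) ≤ F(L_ncvx)` gives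
`‖Z‖_* ≤ ⟨R, Δ⟩ = ⟨P_T R, P_T Δ⟩ + ⟨P_{T⊥} R, Z⟩ ≤ ‖P_T R‖_F ‖P_T Δ‖_F + ‖Z‖_* / 2`.
-/

open MeasureTheory ProbabilityTheory Matrix
open scoped ENNReal

noncomputable section

/-- Frobenius norm of a real matrix. -/
def frobNorm {n m : ℕ} (A : Matrix (Fin n) (Fin m) ℝ) : ℝ :=
  Real.sqrt (∑ i, ∑ j, (A i j) ^ 2)

/-- Entrywise sup norm (largest absolute value of an entry). -/
def infNorm {n m : ℕ} (A : Matrix (Fin n) (Fin m) ℝ) : ℝ :=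
  ⨆ i, ⨆ j, |A i j|

/-- Largest Euclidean norm of a row. -/
def row2InfNorm {n m : ℕ} (A : Matrix (Fin n) (Fin m) ℝ) : ℝ :=
  ⨆ i, Real.sqrt (∑ j, (A i j) ^ 2)

/-- The (unsorted) singular values of a real matrix: square roots of the
eigenvalues of `Aᵀ * A`. -/
def singVal {n m : ℕ} (A : Matrix (Fin n) (Fin m) ℝ) : Fin m → ℝ :=
  fun j => Real.sqrt (((by simpa using Matrix.isHermitian_conjTranspose_mul_self A : (Aᵀ * A).IsHermitian)).eigenvalues j)

/-- Spectral norm: the largest singular value. -/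
def specNorm {n m : ℕ} (A : Matrix (Fin n) (Fin m) ℝ) : ℝ :=
  ⨆ j, singVal A j

/-- Nuclear norm: the sum of the singular values. -/
def nucNorm {n m : ℕ} (A : Matrix (Fin n) (Fin m) ℝ) : ℝ :=
  ∑ j, singVal A j

open Classical in
/-- Projection onto the observed entries. -/
def POmega {n : ℕ} (S : Set (Fin n × Fin n)) (A : Matrix (Fin n) (Fin n) ℝ) :
    Matrix (Fin n) (Fin n) ℝ :=
  fun i j => if (i, j) ∈ S then A i j else 0

/-- Trace inner product of two real matrices. -/
def minner {n m : ℕ} (A B : Matrix (Fin n) (Fin m) ℝ) : ℝ :=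
  ∑ i, ∑ j, A i j * B i j

/-- The square-root matrix completion objective. -/
def sqF {n : ℕ} (S : Set (Fin n × Fin n)) (M : Matrix (Fin n) (Fin n) ℝ) (lam : ℝ)
    (L : Matrix (Fin n) (Fin n) ℝ) : ℝ :=
  frobNorm (POmega S (L - M)) + lam * nucNorm L

/-- `X`-gradient of the nonconvex objective `g`. -/
def gradX {n r : ℕ} (S : Set (Fin n × Fin n)) (M : Matrix (Fin n) (Fin n) ℝ) (lam : ℝ)
    (X Y : Matrix (Fin n) (Fin r) ℝ) : Matrix (Fin n) (Fin r) ℝ :=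
  (frobNorm (POmega S (X * Yᵀ - M)))⁻¹ • (POmega S (X * Yᵀ - M) * Y) + lam • X

/-- `Y`-gradient of the nonconvex objective `g`. -/
def gradY {n r : ℕ} (S : Set (Fin n × Fin n)) (M : Matrix (Fin n) (Fin n) ℝ) (lam : ℝ)
    (X Y : Matrix (Fin n) (Fin r) ℝ) : Matrix (Fin n) (Fin r) ℝ :=
  (frobNorm (POmega S (X * Yᵀ - M)))⁻¹ • ((POmega S (X * Yᵀ - M))ᵀ * X) + lam • Y

/-- Frobenius norm of the full gradient of `g`. -/
def gradNorm {n r : ℕ} (S : Set (Fin n × Fin n)) (M : Matrix (Fin n) (Fin n) ℝ) (lam : ℝ)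
    (X Y : Matrix (Fin n) (Fin r) ℝ) : ℝ :=
  Real.sqrt ((frobNorm (gradX S M lam X Y)) ^ 2 + (frobNorm (gradY S M lam X Y)) ^ 2)

/-- Orthogonal projection onto the tangent space `T = {U Aᵀ + B Vᵀ}` (for `U, V` with
orthonormal columns), with respect to the trace inner product. -/
def projT {n r : ℕ} (U V : Matrix (Fin n) (Fin r) ℝ) (A : Matrix (Fin n) (Fin n) ℝ) :
    Matrix (Fin n) (Fin n) ℝ :=
  U * Uᵀ * A + A * (V * Vᵀ) - U * Uᵀ * A * (V * Vᵀ)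

/-- Orthogonal projection onto the orthogonal complement of the tangent space. -/
def projTperp {n r : ℕ} (U V : Matrix (Fin n) (Fin r) ℝ) (A : Matrix (Fin n) (Fin n) ℝ) :
    Matrix (Fin n) (Fin n) ℝ :=
  A - projT U V A

open Classical in
/-- Indicator (as a real random variable) that an entry is observed. -/
def obsInd {n : ℕ} {Ω₀ : Type} (Obs : Ω₀ → Set (Fin n × Fin n)) (k : Fin n × Fin n)
    (ω : Ω₀) : ℝ :=
  if k ∈ Obs ω then 1 else 0

end

namespace Matrix

theorem dotProduct_le_sqrt_mul_sqrt {ι : Type*} [Fintype ι] (x y : ι → ℝ) :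
    x ⬝ᵥ y ≤ √(x ⬝ᵥ x) * √(y ⬝ᵥ y) := by
  simpa only [dotProduct, pow_two] using Real.sum_mul_le_sqrt_mul_sqrt Finset.univ x y

theorem mulVec_dotProduct_mulVec {ι κ κ' : Type*} [Fintype ι] [Fintype κ] [Fintype κ']
    (A : Matrix ι κ ℝ) (B : Matrix ι κ' ℝ) (x : κ → ℝ) (y : κ' → ℝ) :
    (A *ᵥ x) ⬝ᵥ (B *ᵥ y) = x ⬝ᵥ ((Aᵀ * B) *ᵥ y) := by
  rw [dotProduct_mulVec, dotProduct_mulVec, ← vecMul_vecMul, vecMul_transpose]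

theorem transpose_mul_apply_eq_dotProduct {ι κ κ' : Type*} [Fintype ι]
    (X : Matrix ι κ ℝ) (Y : Matrix ι κ' ℝ) (i : κ) (j : κ') :
    (Xᵀ * Y) i j = Xᵀ i ⬝ᵥ Yᵀ j :=
  rfl

theorem mulVec_transpose_apply {ι κ κ' : Type*} [Fintype κ] (B : Matrix ι κ ℝ)
    (Q : Matrix κ κ' ℝ) (j : κ') : B *ᵥ Qᵀ j = (B * Q)ᵀ j := by
  ext i
  simp [mulVec, dotProduct, Matrix.mul_apply]

theorem isHermitian_transpose_mul_self {ι κ : Type*} [Fintype ι] (A : Matrix ι κ ℝ) :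
    (Aᵀ * A).IsHermitian := by
  simpa using isHermitian_conjTranspose_mul_self A

theorem dotProduct_mulVec_self_le_of_gram_eq {ι κ : Type*} [Fintype ι] [Fintype κ]
    [DecidableEq κ] {B : Matrix ι κ ℝ} {Q : Matrix κ κ ℝ} {μ : κ → ℝ} {c : ℝ}
    (hQ : Q * Qᵀ = 1) (hB : Bᵀ * B = Q * diagonal μ * Qᵀ) (hμ : ∀ j, μ j ≤ c) (x : κ → ℝ) :
    (B *ᵥ x) ⬝ᵥ (B *ᵥ x) ≤ c * (x ⬝ᵥ x) := by
  have hy : (Qᵀ *ᵥ x) ⬝ᵥ (Qᵀ *ᵥ x) = x ⬝ᵥ x := by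
    rw [mulVec_dotProduct_mulVec, transpose_transpose, hQ, one_mulVec]
  set y := Qᵀ *ᵥ x
  calc (B *ᵥ x) ⬝ᵥ (B *ᵥ x) = ∑ j, μ j * y j ^ 2 := by
        rw [mulVec_dotProduct_mulVec, hB, ← mulVec_mulVec, ← mulVec_mulVec, dotProduct_mulVec,
          ← mulVec_transpose, dotProduct_comm, dotProduct]
        simp only [mulVec_diagonal]
        exact Finset.sum_congr rfl fun j _ => by ring
    _ ≤ ∑ j, c * y j ^ 2 := by gcongr with j; exact hμ j
    _ = c * (x ⬝ᵥ x) := by rw [← hy, dotProduct, Finset.mul_sum]; simp only [pow_two]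

end Matrix

noncomputable section

variable {n m r : ℕ}

theorem minner_eq_trace (A B : Matrix (Fin n) (Fin m) ℝ) : minner A B = trace (Aᵀ * B) := by
  rw [trace]
  simp only [diag_apply, Matrix.mul_apply, transpose_apply, minner]
  rw [Finset.sum_comm]

theorem minner_comm (A B : Matrix (Fin n) (Fin m) ℝ) : minner A B = minner B A := by
  simp only [minner, mul_comm]

theorem minner_add_left (A B C : Matrix (Fin n) (Fin m) ℝ) :
    minner (A + B) C = minner A C + minner B C := by
  simp only [minner, Matrix.add_apply, add_mul, Finset.sum_add_distrib]

theorem minner_add_right (A B C : Matrix (Fin n) (Fin m) ℝ) :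
    minner A (B + C) = minner A B + minner A C := by
  simp only [minner, Matrix.add_apply, mul_add, Finset.sum_add_distrib]

theorem minner_sub_right (A B C : Matrix (Fin n) (Fin m) ℝ) :
    minner A (B - C) = minner A B - minner A C := by
  simp only [minner, Matrix.sub_apply, mul_sub, Finset.sum_sub_distrib]

theorem minner_smul_left (c : ℝ) (A B : Matrix (Fin n) (Fin m) ℝ) :
    minner (c • A) B = c * minner A B := by
  simp only [minner, Matrix.smul_apply, smul_eq_mul, Finset.mul_sum, mul_assoc]

theorem minner_mul_orthogonal {Q : Matrix (Fin m) (Fin m) ℝ} (hQ : Q * Qᵀ = 1)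
    (A B : Matrix (Fin n) (Fin m) ℝ) : minner (A * Q) (B * Q) = minner A B := by
  rw [minner_eq_trace, minner_eq_trace, transpose_mul, Matrix.mul_assoc, trace_mul_comm,
    Matrix.mul_assoc, Matrix.mul_assoc B, hQ, Matrix.mul_one]

theorem minner_self (A : Matrix (Fin n) (Fin m) ℝ) : minner A A = frobNorm A ^ 2 := by
  rw [frobNorm, Real.sq_sqrt (by positivity)]
  simp only [minner, pow_two]

theorem frobNorm_nonneg (A : Matrix (Fin n) (Fin m) ℝ) : 0 ≤ frobNorm A :=
  Real.sqrt_nonneg _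

theorem minner_le_frobNorm_mul_frobNorm (A B : Matrix (Fin n) (Fin m) ℝ) :
    minner A B ≤ frobNorm A * frobNorm B := by
  have h := Real.sum_mul_le_sqrt_mul_sqrt Finset.univ (fun p : Fin n × Fin m => A p.1 p.2)
    (fun p => B p.1 p.2)
  simpa only [Fintype.sum_prod_type, minner, frobNorm] using h

theorem frobNorm_add_minner_sub_le (a b : Matrix (Fin n) (Fin m) ℝ) :
    frobNorm a + minner ((frobNorm a)⁻¹ • a) (b - a) ≤ frobNorm b := by
  rcases (frobNorm_nonneg a).eq_or_lt with h | h
  · rw [← h, _root_.inv_zero, zero_smul, zero_add]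
    simpa [minner] using frobNorm_nonneg b
  · rw [minner_smul_left, minner_sub_right, minner_self]
    have hcs := minner_le_frobNorm_mul_frobNorm a b
    have key : (frobNorm a)⁻¹ * (minner a b - frobNorm a ^ 2) ≤ frobNorm b - frobNorm a := by
      rw [inv_mul_le_iff₀ h]
      linarith
    linarith

abbrev rightSingVecs (A : Matrix (Fin n) (Fin m) ℝ) : Matrix (Fin m) (Fin m) ℝ :=
  (isHermitian_transpose_mul_self A).eigenvectorUnitary

theorem rightSingVecs_transpose_mul_self (A : Matrix (Fin n) (Fin m) ℝ) :
    (rightSingVecs A)ᵀ * rightSingVecs A = 1 := by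
  simpa [star_eq_conjTranspose] using
    Unitary.coe_star_mul_self (isHermitian_transpose_mul_self A).eigenvectorUnitary

theorem rightSingVecs_mul_transpose_self (A : Matrix (Fin n) (Fin m) ℝ) :
    rightSingVecs A * (rightSingVecs A)ᵀ = 1 := by
  simpa [star_eq_conjTranspose] using
    Unitary.coe_mul_star_self (isHermitian_transpose_mul_self A).eigenvectorUnitary

theorem transpose_mul_self_eq_spectral (A : Matrix (Fin n) (Fin m) ℝ) :
    Aᵀ * A = rightSingVecs A * diagonal (fun j => singVal A j ^ 2) * (rightSingVecs A)ᵀ := by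
  have hsq : (fun j => singVal A j ^ 2) = (isHermitian_transpose_mul_self A).eigenvalues :=
    funext fun j => Real.sq_sqrt ((posSemidef_conjTranspose_mul_self A).eigenvalues_nonneg j)
  rw [hsq]
  conv_lhs => rw [(isHermitian_transpose_mul_self A).spectral_theorem]
  simp [star_eq_conjTranspose, RCLike.ofReal_real_eq_id]

theorem gram_mul_rightSingVecs (A : Matrix (Fin n) (Fin m) ℝ) :
    (A * rightSingVecs A)ᵀ * (A * rightSingVecs A) = diagonal (fun j => singVal A j ^ 2) := by
  rw [transpose_mul, Matrix.mul_assoc, ← Matrix.mul_assoc Aᵀ, transpose_mul_self_eq_spectral]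
  simp only [← Matrix.mul_assoc, rightSingVecs_transpose_mul_self, Matrix.one_mul]
  rw [Matrix.mul_assoc, rightSingVecs_transpose_mul_self, Matrix.mul_one]

theorem singVal_nonneg (A : Matrix (Fin n) (Fin m) ℝ) (j : Fin m) : 0 ≤ singVal A j :=
  Real.sqrt_nonneg _

theorem singVal_le_specNorm (A : Matrix (Fin n) (Fin m) ℝ) (j : Fin m) :
    singVal A j ≤ specNorm A :=
  le_ciSup (Set.finite_range _).bddAbove j

theorem specNorm_nonneg (A : Matrix (Fin n) (Fin m) ℝ) : 0 ≤ specNorm A :=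
  Real.iSup_nonneg (singVal_nonneg A)

theorem nucNorm_nonneg (A : Matrix (Fin n) (Fin m) ℝ) : 0 ≤ nucNorm A :=
  Finset.sum_nonneg fun j _ => singVal_nonneg A j

theorem dotProduct_mulVec_self_le_specNorm (A : Matrix (Fin n) (Fin m) ℝ) (x : Fin m → ℝ) :
    (A *ᵥ x) ⬝ᵥ (A *ᵥ x) ≤ specNorm A ^ 2 * (x ⬝ᵥ x) :=
  dotProduct_mulVec_self_le_of_gram_eq (rightSingVecs_mul_transpose_self A)
    (transpose_mul_self_eq_spectral A)
    (fun j => pow_le_pow_left₀ (singVal_nonneg A j) (singVal_le_specNorm A j) 2) x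

theorem specNorm_le_bound {B : Matrix (Fin n) (Fin m) ℝ} {c : ℝ} (hc : 0 ≤ c)
    (hB : ∀ x, (B *ᵥ x) ⬝ᵥ (B *ᵥ x) ≤ c ^ 2 * (x ⬝ᵥ x)) : specNorm B ≤ c := by
  refine Real.iSup_le (fun j => ?_) hc
  set Q := rightSingVecs B
  have h := hB (Qᵀ j)
  rw [mulVec_transpose_apply, ← transpose_mul_apply_eq_dotProduct, gram_mul_rightSingVecs,
    ← transpose_mul_apply_eq_dotProduct, rightSingVecs_transpose_mul_self] at h
  simp only [diagonal_apply_eq, one_apply_eq, mul_one] at h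
  exact (pow_le_pow_iff_left₀ (singVal_nonneg B j) hc two_ne_zero).mp h

theorem gram_mul_apply_self_le_specNorm {κ : Type*} [DecidableEq κ]
    (B : Matrix (Fin n) (Fin m) ℝ) {Q : Matrix (Fin m) κ ℝ} (hQ : Qᵀ * Q = 1) (j : κ) :
    ((B * Q)ᵀ * (B * Q)) j j ≤ specNorm B ^ 2 := by
  have h := dotProduct_mulVec_self_le_specNorm B (Qᵀ j)
  rwa [mulVec_transpose_apply, ← transpose_mul_apply_eq_dotProduct,
    ← transpose_mul_apply_eq_dotProduct, hQ, one_apply_eq, mul_one] at h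

theorem minner_le_specNorm_mul_nucNorm (B A : Matrix (Fin n) (Fin m) ℝ) :
    minner B A ≤ specNorm B * nucNorm A := by
  set Q := rightSingVecs A
  rw [← minner_mul_orthogonal (rightSingVecs_mul_transpose_self A), minner_eq_trace, trace,
    nucNorm, Finset.mul_sum]
  refine Finset.sum_le_sum fun j _ => ?_
  have hB : √(((B * Q)ᵀ * (B * Q)) j j) ≤ specNorm B := by
    rw [← Real.sqrt_sq (specNorm_nonneg B)]
    exact Real.sqrt_le_sqrt
      (gram_mul_apply_self_le_specNorm B (rightSingVecs_transpose_mul_self A) j)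
  have hA : √(((A * Q)ᵀ * (A * Q)) j j) = singVal A j := by
    rw [gram_mul_rightSingVecs, diagonal_apply_eq, Real.sqrt_sq (singVal_nonneg A j)]
  calc ((B * Q)ᵀ * (A * Q)).diag j
      ≤ √(((B * Q)ᵀ * (B * Q)) j j) * √(((A * Q)ᵀ * (A * Q)) j j) :=
        dotProduct_le_sqrt_mul_sqrt ((B * Q)ᵀ j) ((A * Q)ᵀ j)
    _ ≤ specNorm B * singVal A j := by
        rw [hA]
        exact mul_le_mul_of_nonneg_right hB (singVal_nonneg A j)

/-- The factor `W` of the polar decomposition `A = W (AᵀA)^{1/2}`; the convention `0⁻¹ = 0`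
makes it vanish on the kernel of `A`, so that `W` is a partial isometry. -/
def polarFactor (A : Matrix (Fin n) (Fin m) ℝ) : Matrix (Fin n) (Fin m) ℝ :=
  A * (rightSingVecs A * diagonal (fun j => (singVal A j)⁻¹) * (rightSingVecs A)ᵀ)

theorem polarFactor_mul_rightSingVecs (A : Matrix (Fin n) (Fin m) ℝ) :
    polarFactor A * rightSingVecs A =
      A * rightSingVecs A * diagonal (fun j => (singVal A j)⁻¹) := by
  rw [polarFactor, Matrix.mul_assoc, Matrix.mul_assoc, rightSingVecs_transpose_mul_self,
    Matrix.mul_one, Matrix.mul_assoc]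

theorem minner_polarFactor_self (A : Matrix (Fin n) (Fin m) ℝ) :
    minner (polarFactor A) A = nucNorm A := by
  rw [← minner_mul_orthogonal (rightSingVecs_mul_transpose_self A),
    polarFactor_mul_rightSingVecs, minner_eq_trace, transpose_mul, diagonal_transpose,
    Matrix.mul_assoc, gram_mul_rightSingVecs, diagonal_mul_diagonal, trace_diagonal, nucNorm]
  refine Finset.sum_congr rfl fun j _ => ?_
  rcases eq_or_ne (singVal A j) 0 with h | h
  · simp [h]
  · field_simp

theorem gram_polarFactor (A : Matrix (Fin n) (Fin m) ℝ) :
    (polarFactor A)ᵀ * polarFactor A = rightSingVecs A *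
      diagonal (fun j => (singVal A j)⁻¹ * singVal A j ^ 2 * (singVal A j)⁻¹) *
        (rightSingVecs A)ᵀ := by
  have hW : polarFactor A = polarFactor A * rightSingVecs A * (rightSingVecs A)ᵀ := by
    rw [Matrix.mul_assoc, rightSingVecs_mul_transpose_self, Matrix.mul_one]
  set D := diagonal (fun j => (singVal A j)⁻¹)
  set P := A * rightSingVecs A
  rw [hW, polarFactor_mul_rightSingVecs]
  calc (P * D * (rightSingVecs A)ᵀ)ᵀ * (P * D * (rightSingVecs A)ᵀ)
      = rightSingVecs A * (D * (Pᵀ * P) * D) * (rightSingVecs A)ᵀ := by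
        simp only [D, transpose_mul, transpose_transpose, diagonal_transpose, Matrix.mul_assoc]
    _ = _ := by rw [gram_mul_rightSingVecs, diagonal_mul_diagonal, diagonal_mul_diagonal]

theorem specNorm_polarFactor_le_one (A : Matrix (Fin n) (Fin m) ℝ) :
    specNorm (polarFactor A) ≤ 1 := by
  refine specNorm_le_bound zero_le_one fun x => ?_
  rw [one_pow]
  refine dotProduct_mulVec_self_le_of_gram_eq (rightSingVecs_mul_transpose_self A)
    (gram_polarFactor A) (fun j => ?_) x
  rcases eq_or_ne (singVal A j) 0 with h | h
  · simp [h]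
  · field_simp
    rfl

theorem transpose_mul_polarFactor_eq_zero {U : Matrix (Fin n) (Fin r) ℝ}
    {A : Matrix (Fin n) (Fin m) ℝ} (hA : Uᵀ * A = 0) : Uᵀ * polarFactor A = 0 := by
  rw [polarFactor, ← Matrix.mul_assoc, hA, Matrix.zero_mul]

theorem polarFactor_mul_eq_zero {V : Matrix (Fin m) (Fin r) ℝ}
    {A : Matrix (Fin n) (Fin m) ℝ} (hA : A * V = 0) : polarFactor A * V = 0 := by
  set Q := rightSingVecs A
  -- `σ⁻¹ = σ⁻³ σ²` (also at `σ = 0`) lets `Aᵀ * A` be split off on the right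
  have hG : Q * diagonal (fun j => (singVal A j)⁻¹) * Qᵀ =
      Q * diagonal (fun j => (singVal A j)⁻¹ ^ 3) * Qᵀ * (Aᵀ * A) := by
    rw [transpose_mul_self_eq_spectral]
    simp only [Matrix.mul_assoc]
    congr 1
    simp only [← Matrix.mul_assoc]
    rw [Matrix.mul_assoc _ Qᵀ Q, rightSingVecs_transpose_mul_self, Matrix.mul_one,
      diagonal_mul_diagonal]
    congr 3
    funext j
    rcases eq_or_ne (singVal A j) 0 with h | h
    · simp [h]
    · field_simp
  rw [polarFactor, hG]
  simp only [Matrix.mul_assoc, hA, Matrix.mul_zero]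

theorem POmega_sub (S : Set (Fin n × Fin n)) (A B : Matrix (Fin n) (Fin n) ℝ) :
    POmega S (A - B) = POmega S A - POmega S B := by
  ext i j
  simp only [POmega, Matrix.sub_apply]
  split_ifs <;> simp

theorem minner_POmega_left (S : Set (Fin n × Fin n)) (A B : Matrix (Fin n) (Fin n) ℝ) :
    minner (POmega S A) B = minner (POmega S A) (POmega S B) := by
  simp only [minner, POmega]
  refine Finset.sum_congr rfl fun i _ => Finset.sum_congr rfl fun j _ => ?_
  split_ifs <;> simp

theorem frobNorm_POmega_add_minner_le (S : Set (Fin n × Fin n))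
    (M L Δ : Matrix (Fin n) (Fin n) ℝ) :
    frobNorm (POmega S (L - M)) +
        minner ((frobNorm (POmega S (L - M)))⁻¹ • POmega S (L - M)) Δ ≤
      frobNorm (POmega S (L + Δ - M)) := by
  have h := frobNorm_add_minner_sub_le (POmega S (L - M)) (POmega S (L + Δ - M))
  rw [← POmega_sub, add_sub_right_comm, add_sub_cancel_left, minner_smul_left,
    ← minner_POmega_left, ← minner_smul_left] at h
  rwa [add_sub_right_comm L Δ M]

section TangentSpace

variable {U V : Matrix (Fin n) (Fin r) ℝ}

theorem transpose_mul_projTperp (hU : Uᵀ * U = 1) (A : Matrix (Fin n) (Fin n) ℝ) :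
    Uᵀ * projTperp U V A = 0 := by
  simp only [projTperp, projT, Matrix.mul_sub, Matrix.mul_add, ← Matrix.mul_assoc, hU,
    Matrix.one_mul]
  abel

theorem projTperp_mul (hV : Vᵀ * V = 1) (A : Matrix (Fin n) (Fin n) ℝ) :
    projTperp U V A * V = 0 := by
  simp only [projTperp, projT, Matrix.sub_mul, Matrix.add_mul, Matrix.mul_assoc, hV,
    Matrix.mul_one]
  abel

theorem minner_mul_eq_zero {X : Matrix (Fin r) (Fin m) ℝ} {Z : Matrix (Fin n) (Fin m) ℝ}
    (hZU : Uᵀ * Z = 0) : minner (U * X) Z = 0 := by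
  rw [minner_eq_trace, transpose_mul, Matrix.mul_assoc, hZU, Matrix.mul_zero, trace_zero]

theorem minner_mul_transpose_eq_zero {Y : Matrix (Fin m) (Fin r) ℝ}
    {Z : Matrix (Fin m) (Fin n) ℝ} (hZV : Z * V = 0) : minner (Y * Vᵀ) Z = 0 := by
  rw [minner_eq_trace, transpose_mul, transpose_transpose, Matrix.mul_assoc, trace_mul_comm,
    Matrix.mul_assoc, hZV, Matrix.mul_zero, trace_zero]

theorem minner_projT_eq_zero {Z : Matrix (Fin n) (Fin n) ℝ} (hZU : Uᵀ * Z = 0)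
    (hZV : Z * V = 0) (A : Matrix (Fin n) (Fin n) ℝ) : minner (projT U V A) Z = 0 := by
  have hT : projT U V A = U * (Uᵀ * A) + (A * V - U * Uᵀ * A * V) * Vᵀ := by
    simp only [projT, Matrix.sub_mul, Matrix.mul_assoc]
    abel
  rw [hT, minner_add_left, minner_mul_eq_zero hZU, minner_mul_transpose_eq_zero hZV, add_zero]

theorem minner_eq_minner_projT_add_minner_projTperp (hU : Uᵀ * U = 1) (hV : Vᵀ * V = 1)
    (A B : Matrix (Fin n) (Fin n) ℝ) :
    minner A B = minner (projT U V A) (projT U V B) +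
      minner (projTperp U V A) (projTperp U V B) := by
  have hsplit (X : Matrix (Fin n) (Fin n) ℝ) : X = projT U V X + projTperp U V X := by
    rw [projTperp]; abel
  have h₁ := minner_projT_eq_zero (transpose_mul_projTperp hU B) (projTperp_mul hV B) A
  have h₂ := minner_projT_eq_zero (transpose_mul_projTperp hU A) (projTperp_mul hV A) B
  rw [minner_comm] at h₂
  conv_lhs => rw [hsplit A, hsplit B]
  rw [minner_add_left, minner_add_right, minner_add_right, h₁, h₂]
  ring

end TangentSpace

theorem specNorm_mul_transpose_add_le_one {U : Matrix (Fin n) (Fin r) ℝ}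
    {V : Matrix (Fin m) (Fin r) ℝ} {W : Matrix (Fin n) (Fin m) ℝ} (hU : Uᵀ * U = 1)
    (hV : Vᵀ * V = 1) (hWU : Uᵀ * W = 0) (hWV : W * V = 0) (hW : specNorm W ≤ 1) :
    specNorm (U * Vᵀ + W) ≤ 1 := by
  refine specNorm_le_bound zero_le_one fun x => ?_
  set y := Vᵀ *ᵥ x
  set p := x - V *ᵥ y
  -- `W` only sees the component `p` of `x` orthogonal to the columns of `V`
  have hx : (U * Vᵀ + W) *ᵥ x = U *ᵥ y + W *ᵥ p := by
    rw [add_mulVec, ← mulVec_mulVec, mulVec_sub, mulVec_mulVec _ W, hWV, zero_mulVec, sub_zero]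
  have hxV : x ⬝ᵥ (V *ᵥ y) = y ⬝ᵥ y := by rw [dotProduct_mulVec, ← mulVec_transpose]
  have hVV : (V *ᵥ y) ⬝ᵥ (V *ᵥ y) = y ⬝ᵥ y := by
    rw [mulVec_dotProduct_mulVec, hV, one_mulVec]
  have hpp : p ⬝ᵥ p = x ⬝ᵥ x - y ⬝ᵥ y := by
    simp only [p, sub_dotProduct, dotProduct_sub, dotProduct_comm (V *ᵥ y) x, hxV, hVV]
    ring
  have hUU : (U *ᵥ y) ⬝ᵥ (U *ᵥ y) = y ⬝ᵥ y := by
    rw [mulVec_dotProduct_mulVec, hU, one_mulVec]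
  have hUW : (U *ᵥ y) ⬝ᵥ (W *ᵥ p) = 0 := by
    rw [mulVec_dotProduct_mulVec, hWU, zero_mulVec, dotProduct_zero]
  have hWp : (W *ᵥ p) ⬝ᵥ (W *ᵥ p) ≤ p ⬝ᵥ p := by
    have hp : 0 ≤ p ⬝ᵥ p := by simpa using dotProduct_self_star_nonneg p
    exact (dotProduct_mulVec_self_le_specNorm W p).trans
      (mul_le_of_le_one_left hp (pow_le_one₀ (specNorm_nonneg W) hW))
  rw [hx, add_dotProduct, dotProduct_add, dotProduct_add, dotProduct_comm (W *ᵥ p), hUU, hUW]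
  linarith

theorem minner_mul_diagonal_mul_transpose (X : Matrix (Fin n) (Fin m) ℝ)
    (U : Matrix (Fin n) (Fin r) ℝ) (V : Matrix (Fin m) (Fin r) ℝ) (Sg : Fin r → ℝ) :
    minner X (U * diagonal Sg * Vᵀ) = ∑ i, Sg i * ((X * V)ᵀ * U) i i := by
  rw [minner_eq_trace, ← Matrix.mul_assoc, trace_mul_comm, ← Matrix.mul_assoc,
    ← Matrix.mul_assoc, ← transpose_mul, trace]
  simp only [diag_apply, mul_diagonal, mul_comm]

theorem minner_mul_transpose_svd {U : Matrix (Fin n) (Fin r) ℝ} {V : Matrix (Fin m) (Fin r) ℝ}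
    (hU : Uᵀ * U = 1) (hV : Vᵀ * V = 1) (Sg : Fin r → ℝ) :
    minner (U * Vᵀ) (U * diagonal Sg * Vᵀ) = ∑ i, Sg i := by
  rw [minner_mul_diagonal_mul_transpose, Matrix.mul_assoc, hV, Matrix.mul_one, hU]
  simp

theorem minner_svd_le {U : Matrix (Fin n) (Fin r) ℝ} {V : Matrix (Fin m) (Fin r) ℝ}
    {W : Matrix (Fin n) (Fin m) ℝ} {Sg : Fin r → ℝ} (hU : Uᵀ * U = 1) (hV : Vᵀ * V = 1)
    (hW : specNorm W ≤ 1) (hSg : ∀ i, 0 ≤ Sg i) :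
    minner W (U * diagonal Sg * Vᵀ) ≤ ∑ i, Sg i := by
  rw [minner_mul_diagonal_mul_transpose]
  refine Finset.sum_le_sum fun i _ => mul_le_of_le_one_right (hSg i) ?_
  have hWV : ((W * V)ᵀ * (W * V)) i i ≤ 1 :=
    (gram_mul_apply_self_le_specNorm W hV i).trans (pow_le_one₀ (specNorm_nonneg W) hW)
  calc ((W * V)ᵀ * U) i i ≤ √(((W * V)ᵀ * (W * V)) i i) * √((Uᵀ * U) i i) :=
        dotProduct_le_sqrt_mul_sqrt ((W * V)ᵀ i) (Uᵀ i)
    _ ≤ 1 := by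
        rw [hU, one_apply_eq, Real.sqrt_one, mul_one, Real.sqrt_le_one]
        exact hWV

theorem nucNorm_svd_le {U : Matrix (Fin n) (Fin r) ℝ} {V : Matrix (Fin m) (Fin r) ℝ}
    {Sg : Fin r → ℝ} (hU : Uᵀ * U = 1) (hV : Vᵀ * V = 1) (hSg : ∀ i, 0 ≤ Sg i) :
    nucNorm (U * diagonal Sg * Vᵀ) ≤ ∑ i, Sg i := by
  rw [← minner_polarFactor_self]
  exact minner_svd_le hU hV (specNorm_polarFactor_le_one _) hSg

theorem nucNorm_svd_add_minner_add_nucNorm_projTperp_le {U V : Matrix (Fin n) (Fin r) ℝ}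
    {Sg : Fin r → ℝ} (hU : Uᵀ * U = 1) (hV : Vᵀ * V = 1) (hSg : ∀ i, 0 ≤ Sg i)
    (Δ : Matrix (Fin n) (Fin n) ℝ) :
    nucNorm (U * diagonal Sg * Vᵀ) + minner (U * Vᵀ) Δ + nucNorm (projTperp U V Δ) ≤
      nucNorm (U * diagonal Sg * Vᵀ + Δ) := by
  set L := U * diagonal Sg * Vᵀ
  set Z := projTperp U V Δ
  set W := polarFactor Z
  have hWU : Uᵀ * W = 0 := transpose_mul_polarFactor_eq_zero (transpose_mul_projTperp hU Δ)
  have hWV : W * V = 0 := polarFactor_mul_eq_zero (projTperp_mul hV Δ)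
  have hWL : minner W L = 0 := by
    rw [minner_comm, show L = U * (diagonal Sg * Vᵀ) from Matrix.mul_assoc _ _ _]
    exact minner_mul_eq_zero hWU
  have hWΔ : minner W Δ = nucNorm Z := by
    have hΔ : Δ = projT U V Δ + Z := (add_sub_cancel _ _).symm
    rw [hΔ, minner_add_right, minner_comm, minner_projT_eq_zero hWU hWV, zero_add,
      minner_polarFactor_self]
  calc nucNorm L + minner (U * Vᵀ) Δ + nucNorm Z
      ≤ ∑ i, Sg i + minner (U * Vᵀ) Δ + nucNorm Z := by
        gcongr; exact nucNorm_svd_le hU hV hSg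
    _ = minner (U * Vᵀ + W) (L + Δ) := by
        rw [minner_add_left, minner_add_right, minner_add_right, minner_mul_transpose_svd hU hV,
          hWL, hWΔ]
        ring
    _ ≤ specNorm (U * Vᵀ + W) * nucNorm (L + Δ) := minner_le_specNorm_mul_nucNorm _ _
    _ ≤ nucNorm (L + Δ) := mul_le_of_le_one_left (nucNorm_nonneg _)
        (specNorm_mul_transpose_add_le_one hU hV hWU hWV (specNorm_polarFactor_le_one Z))

theorem nucNorm_projTperp_sub_le_minner {lam : ℝ} (hlam : 0 < lam)
    {Ω : Set (Fin n × Fin n)} {M : Matrix (Fin n) (Fin n) ℝ} {U V : Matrix (Fin n) (Fin r) ℝ}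
    {Sg : Fin r → ℝ} {Lncvx R Lcvx : Matrix (Fin n) (Fin n) ℝ}
    (hSVD : Lncvx = U * diagonal Sg * Vᵀ) (hU : Uᵀ * U = 1) (hV : Vᵀ * V = 1)
    (hSg : ∀ i, 0 ≤ Sg i)
    (hR : (frobNorm (POmega Ω (Lncvx - M)))⁻¹ • POmega Ω (Lncvx - M) = (-lam) • (U * Vᵀ + R))
    (hmin : sqF Ω M lam Lcvx ≤ sqF Ω M lam Lncvx) :
    nucNorm (projTperp U V (Lcvx - Lncvx)) ≤ minner R (Lcvx - Lncvx) := by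
  set Δ := Lcvx - Lncvx
  have hL : Lcvx = Lncvx + Δ := (add_sub_cancel Lncvx Lcvx).symm
  have hfit := frobNorm_POmega_add_minner_le Ω M Lncvx Δ
  rw [hR, minner_smul_left, minner_add_left, ← hL] at hfit
  have hnuc := nucNorm_svd_add_minner_add_nucNorm_projTperp_le hU hV hSg Δ
  rw [← hSVD, ← hL] at hnuc
  rw [sqF, sqF] at hmin
  have h : lam * nucNorm (projTperp U V Δ) ≤ lam * minner R Δ := by
    linarith [mul_le_mul_of_nonneg_left hnuc hlam.le]
  exact le_of_mul_le_mul_left h hlam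

end

theorem sqrtMC_difference_in_tangent_space_general (n r : ℕ) (lam : ℝ)
    (hlam : 0 < lam) (Ω : Set (Fin n × Fin n)) (M : Matrix (Fin n) (Fin n) ℝ)
    (U V : Matrix (Fin n) (Fin r) ℝ) (Sg : Fin r → ℝ)
    (Lncvx R Lcvx : Matrix (Fin n) (Fin n) ℝ)
    -- compact SVD of `L_ncvx` (in particular it has rank `r`)
    (hSVD : Lncvx = U * Matrix.diagonal Sg * Vᵀ)
    (hU : Uᵀ * U = 1) (hV : Vᵀ * V = 1) (hSg : ∀ i, 0 < Sg i)
    -- positive residual `θ` and definition of `R`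
    (hR : (frobNorm (POmega Ω (Lncvx - M)))⁻¹ • POmega Ω (Lncvx - M) =
      (-lam) • (U * Vᵀ + R))
    (hRperp : specNorm (projTperp U V R) ≤ 1 / 2)
    -- `L_cvx` minimizes the convex objective `F`
    (hmin : ∀ L : Matrix (Fin n) (Fin n) ℝ, sqF Ω M lam Lcvx ≤ sqF Ω M lam L) :
    nucNorm (projTperp U V (Lcvx - Lncvx)) ≤
      2 * frobNorm (projT U V R) * frobNorm (projT U V (Lcvx - Lncvx)) := by
  have hkey := nucNorm_projTperp_sub_le_minner hlam hSVD hU hV (fun i => (hSg i).le) hR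
    (hmin Lncvx)
  rw [minner_eq_minner_projT_add_minner_projTperp hU hV] at hkey
  have hT := minner_le_frobNorm_mul_frobNorm (projT U V R) (projT U V (Lcvx - Lncvx))
  have hTperp : minner (projTperp U V R) (projTperp U V (Lcvx - Lncvx)) ≤
      1 / 2 * nucNorm (projTperp U V (Lcvx - Lncvx)) :=
    (minner_le_specNorm_mul_nucNorm _ _).trans
      (mul_le_mul_of_nonneg_right hRperp (nucNorm_nonneg _))
  linarith

/-- The difference between a convex minimizer and the nonconvex point
lies primarily in the tangent space:
`‖P_{T⊥}(Δ)‖_* ≤ 2 ‖P_T(R)‖_F ‖P_T(Δ)‖_F`. -/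
theorem sqrtMC_difference_in_tangent_space (n r : ℕ) (hn : 0 < n) (hr : 0 < r) (lam : ℝ)
    (hlam : 0 < lam) (Ω : Set (Fin n × Fin n)) (M : Matrix (Fin n) (Fin n) ℝ)
    (U V : Matrix (Fin n) (Fin r) ℝ) (Sg : Fin r → ℝ)
    (Lncvx R Lcvx : Matrix (Fin n) (Fin n) ℝ)
    -- compact SVD of `L_ncvx` (in particular it has rank `r`)
    (hSVD : Lncvx = U * Matrix.diagonal Sg * Vᵀ)
    (hU : Uᵀ * U = 1) (hV : Vᵀ * V = 1) (hSg : ∀ i, 0 < Sg i)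
    -- positive residual `θ` and definition of `R`
    (hθ : 0 < frobNorm (POmega Ω (Lncvx - M)))
    (hR : (frobNorm (POmega Ω (Lncvx - M)))⁻¹ • POmega Ω (Lncvx - M) =
      (-lam) • (U * Vᵀ + R))
    (hRperp : specNorm (projTperp U V R) ≤ 1 / 2)
    -- `L_cvx` minimizes the convex objective `F`
    (hmin : ∀ L : Matrix (Fin n) (Fin n) ℝ, sqF Ω M lam Lcvx ≤ sqF Ω M lam L) :
    nucNorm (projTperp U V (Lcvx - Lncvx)) ≤
      2 * frobNorm (projT U V R) * frobNorm (projT U V (Lcvx - Lncvx)) :=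
  sqrtMC_difference_in_tangent_space_general n r lam hlam Ω M U V Sg Lncvx R Lcvx hSVD hU hV hSg hR
    hRperp hmin
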